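/- Let C ⊆ L0+ be convex, max-closed and bounded. Then C^max ≠ ∅, i.e. C possesses at least one maximal element. -/

import Mathlib

open MeasureTheory Filter Set

noncomputable section

variable {Ω : Type*} [MeasurableSpace Ω]

/-- The nonnegative orthant `L⁰₊` of the space `L⁰` of (a.e.-equivalence classes of)
random variables over `(Ω, ℱ, P)`. -/
def L0plus (P : Measure Ω) : Set (Ω →ₘ[P] ℝ) := {f | 0 ≤ f}

/-- The metric `(f, g) ↦ E[1 ∧ |f - g|]` inducing the topology of convergence
in probability on `L⁰`. -/
def dist0 (P : Measure Ω) (f g : Ω →ₘ[P] ℝ) : ℝ :=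
  ∫ ω, min 1 |f ω - g ω| ∂P

/-- Convergence in probability of a sequence in `L⁰`. -/
def Tendsto0 (P : Measure Ω) (f : ℕ → Ω →ₘ[P] ℝ) (g : Ω →ₘ[P] ℝ) : Prop :=
  Tendsto (fun n => dist0 P (f n) g) atTop (nhds 0)

/-- Closure of a set in `L⁰` with respect to the topology of convergence in probability. -/
def closure0 (P : Measure Ω) (C : Set (Ω →ₘ[P] ℝ)) : Set (Ω →ₘ[P] ℝ) :=
  {f | ∀ ε : ℝ, 0 < ε → ∃ g ∈ C, dist0 P f g < ε}

/-- A set of `L⁰` is closed iff it contains its closure. -/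
def IsClosed0 (P : Measure Ω) (C : Set (Ω →ₘ[P] ℝ)) : Prop :=
  closure0 P C ⊆ C

/-- Boundedness (in probability) of a set `C ⊆ L⁰₊` : `lim_{ℓ → ∞} sup_{f ∈ C} P[f > ℓ] = 0`. -/
def Bounded0 (P : Measure Ω) (C : Set (Ω →ₘ[P] ℝ)) : Prop :=
  Tendsto (fun ℓ : ℝ => ⨆ f ∈ C, P {ω | ℓ < f ω}) atTop (nhds 0)

/-- The set `C^max` of maximal elements of `C ⊆ L⁰₊` : `f ∈ C` such that `f ≤ g` a.s.
and `g ∈ C` imply `f = g` a.s. -/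
def maxSet (P : Measure Ω) (C : Set (Ω →ₘ[P] ℝ)) : Set (Ω →ₘ[P] ℝ) :=
  {f | f ∈ C ∧ ∀ g ∈ C, f ≤ g → f = g}

/-- `C` is max-closed if every maximal element of its closure already belongs to `C`. -/
def MaxClosed (P : Measure Ω) (C : Set (Ω →ₘ[P] ℝ)) : Prop :=
  maxSet P (closure0 P C) ⊆ C

/-- The pairing `⟨μ, f⟩ = ∫ f dμ ∈ [0, ∞]` between a nonnegative measure `μ` and `f ∈ L⁰₊`. -/
def pairing {P : Measure Ω} (μ : Measure Ω) (f : Ω →ₘ[P] ℝ) : ENNReal :=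
  ∫⁻ ω, ENNReal.ofReal (f ω) ∂μ

/-- The set `C^osp` of outer support points of `C ⊆ L⁰₊`: points `g ∈ C^max` for which there
is a σ-finite nonnegative measure `μ ≪ P` with `0 < sup_{f ∈ C} ⟨μ, f⟩ = ⟨μ, g⟩ < ∞`;
by convention `{0}^osp = {0}`. -/
def osp (P : Measure Ω) (C : Set (Ω →ₘ[P] ℝ)) : Set (Ω →ₘ[P] ℝ) :=
  {g | g ∈ maxSet P C ∧
    (C = {0} ∨ ∃ μ : Measure Ω, μ ≪ P ∧ SigmaFinite μ ∧
      0 < pairing μ g ∧ pairing μ g < ⊤ ∧ (⨆ f ∈ C, pairing μ f) = pairing μ g)}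

/-- The solid hull of `C ⊆ L⁰₊`. -/
def solidHull (P : Measure Ω) (C : Set (Ω →ₘ[P] ℝ)) : Set (Ω →ₘ[P] ℝ) :=
  {f | f ∈ L0plus P ∧ ∃ g ∈ C, f ≤ g}

/-- A set `S ⊆ L⁰₊` is solid if `g ∈ S` and `0 ≤ f ≤ g` imply `f ∈ S`. -/
def Solid (P : Measure Ω) (S : Set (Ω →ₘ[P] ℝ)) : Prop :=
  ∀ g ∈ S, ∀ f : Ω →ₘ[P] ℝ, 0 ≤ f → f ≤ g → f ∈ S

/-- `(g n)` is a sequence of forward convex combinations of `(f n)`. -/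
def ForwardConvexComb (P : Measure Ω) (f g : ℕ → Ω →ₘ[P] ℝ) : Prop :=
  ∀ n : ℕ, g n ∈ convexHull ℝ (f '' Set.Ici n)

end
open Topology Real

/-! Zorn's lemma applies in the closure of `C`, which is closed and bounded in probability, and
max-closedness moves its maximal elements back into `C`. Chains have upper bounds because
`f ↦ ∫ arctan f dP` is bounded and strictly monotone: along a monotone sequence in the chain on
which this functional approaches its supremum, boundedness in probability makes the sequence
a.s. bounded, so it converges a.s., hence in probability, to its pointwise supremum `f`, which
lies in the closure. A chain element that is not below some term of the sequence dominates `f`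
without having a larger `∫ arctan`, so it equals `f`. -/

section Dist0

variable {Ω : Type*} [MeasurableSpace Ω] {P : Measure Ω}

lemma min_one_abs_sub_le (a b c : ℝ) :
    min 1 |a - c| ≤ min 1 |a - b| + min 1 |b - c| := by
  have := abs_sub_le a b c
  simp only [min_def]
  split_ifs <;> linarith [abs_nonneg (a - b), abs_nonneg (b - c)]

lemma dist0_self (f : Ω →ₘ[P] ℝ) : dist0 P f f = 0 := by
  simp [dist0]

lemma dist0_comm (f g : Ω →ₘ[P] ℝ) : dist0 P f g = dist0 P g f := by
  simp only [dist0, abs_sub_comm]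

lemma norm_min_one_abs_le_one (x : ℝ) : ‖min 1 |x|‖ ≤ 1 := by
  rw [Real.norm_of_nonneg (le_min zero_le_one (abs_nonneg x))]
  exact min_le_left _ _

variable [IsFiniteMeasure P]

lemma integrable_min_one_abs_sub (f g : Ω →ₘ[P] ℝ) :
    Integrable (fun ω => min 1 |f ω - g ω|) P :=
  (integrable_const (1 : ℝ)).mono'
    (measurable_const.min (f.measurable.sub g.measurable).abs).aestronglyMeasurable
    (ae_of_all _ fun _ => norm_min_one_abs_le_one _)

lemma dist0_triangle (f g h : Ω →ₘ[P] ℝ) :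
    dist0 P f h ≤ dist0 P f g + dist0 P g h := by
  rw [dist0, dist0, dist0,
    ← integral_add (integrable_min_one_abs_sub f g) (integrable_min_one_abs_sub g h)]
  exact integral_mono (integrable_min_one_abs_sub f h)
    ((integrable_min_one_abs_sub f g).add (integrable_min_one_abs_sub g h))
    fun _ => min_one_abs_sub_le _ _ _

lemma meas_one_le_abs_sub_le_dist0 (f g : Ω →ₘ[P] ℝ) :
    P {ω | 1 ≤ |f ω - g ω|} ≤ ENNReal.ofReal (dist0 P f g) := by
  have hnonneg : 0 ≤ᵐ[P] fun ω => min 1 |f ω - g ω| :=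
    ae_of_all _ fun _ => le_min zero_le_one (abs_nonneg _)
  have hset : {ω | 1 ≤ |f ω - g ω|} = {ω | 1 ≤ ENNReal.ofReal (min 1 |f ω - g ω|)} := by
    ext ω; simp [ENNReal.one_le_ofReal]
  rw [dist0, ofReal_integral_eq_lintegral_ofReal (integrable_min_one_abs_sub f g) hnonneg, hset,
    ← one_mul (P _)]
  exact mul_meas_ge_le_lintegral₀
    (measurable_const.min (f.measurable.sub g.measurable).abs).ennreal_ofReal.aemeasurable 1

lemma tendsto0_of_ae_tendsto {F : ℕ → Ω →ₘ[P] ℝ} {f : Ω →ₘ[P] ℝ}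
    (h : ∀ᵐ ω ∂P, Tendsto (fun n => F n ω) atTop (𝓝 (f ω))) : Tendsto0 P F f := by
  have hDCT := tendsto_integral_of_dominated_convergence (μ := P)
    (F := fun n ω => min 1 |F n ω - f ω|) (f := fun _ => 0) (fun _ => 1)
    (fun n => (integrable_min_one_abs_sub (F n) f).aestronglyMeasurable) (integrable_const 1)
    (fun n => ae_of_all _ fun _ => norm_min_one_abs_le_one _)
    (h.mono fun ω hω => by
      simpa using (tendsto_const_nhds.min (hω.sub tendsto_const_nhds).abs :
        Tendsto (fun n => min 1 |F n ω - f ω|) atTop (𝓝 (min 1 |f ω - f ω|))))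
  simpa [Tendsto0, dist0] using hDCT

end Dist0

section Closure0

variable {Ω : Type*} [MeasurableSpace Ω] {P : Measure Ω}

lemma subset_closure0 (C : Set (Ω →ₘ[P] ℝ)) : C ⊆ closure0 P C :=
  fun f hf _ hε => ⟨f, hf, by rwa [dist0_self]⟩

lemma IsClosed0.mem_of_tendsto0 {S : Set (Ω →ₘ[P] ℝ)} (hS : IsClosed0 P S)
    {F : ℕ → Ω →ₘ[P] ℝ} {f : Ω →ₘ[P] ℝ} (hF : ∀ n, F n ∈ S) (hf : Tendsto0 P F f) :
    f ∈ S := by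
  refine hS fun ε hε => ?_
  obtain ⟨n, hn⟩ := (hf.eventually (gt_mem_nhds hε)).exists
  exact ⟨F n, hF n, by rwa [dist0_comm]⟩

lemma isClosed0_closure0 [IsFiniteMeasure P] (C : Set (Ω →ₘ[P] ℝ)) :
    IsClosed0 P (closure0 P C) := by
  intro f hf ε hε
  obtain ⟨g, hg, hfg⟩ := hf (ε / 2) (half_pos hε)
  obtain ⟨h, hh, hgh⟩ := hg (ε / 2) (half_pos hε)
  exact ⟨h, hh, by linarith [dist0_triangle f g h]⟩

end Closure0

section Bounded0

variable {Ω : Type*} [MeasurableSpace Ω] {P : Measure Ω} {S : Set (Ω →ₘ[P] ℝ)}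

lemma Bounded0.mono {T : Set (Ω →ₘ[P] ℝ)} (hT : Bounded0 P T) (hST : S ⊆ T) : Bounded0 P S :=
  tendsto_of_tendsto_of_tendsto_of_le_of_le tendsto_const_nhds hT (fun _ => bot_le)
    fun _ => biSup_mono hST

lemma Bounded0.exists_forall_meas_le (hS : Bounded0 P S) {ε : ENNReal} (hε : 0 < ε) :
    ∃ ℓ : ℝ, ∀ f ∈ S, P {ω | ℓ < f ω} ≤ ε := by
  obtain ⟨ℓ, hℓ⟩ := eventually_atTop.1 (ENNReal.tendsto_nhds_zero.1 hS ε hε)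
  exact ⟨ℓ, fun f hf => (le_biSup (fun f : Ω →ₘ[P] ℝ => P {ω | ℓ < f ω}) hf).trans (hℓ ℓ le_rfl)⟩

lemma meas_lt_le_of_mem_closure0 [IsFiniteMeasure P] {f : Ω →ₘ[P] ℝ} (hf : f ∈ closure0 P S)
    (ℓ : ℝ) : P {ω | ℓ < f ω} ≤ ⨆ g ∈ S, P {ω | ℓ - 1 < g ω} := by
  refine ENNReal.le_of_forall_pos_le_add fun ε hε _ => ?_
  obtain ⟨g, hg, hfg⟩ := hf ε (by exact_mod_cast hε)
  have hsub : {ω | ℓ < f ω} ⊆ {ω | ℓ - 1 < g ω} ∪ {ω | 1 ≤ |f ω - g ω|} := by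
    intro ω (hω : ℓ < f ω)
    by_contra! h
    simp only [mem_union, mem_ofPred_eq, not_or, not_lt] at h
    linarith [le_abs_self (f ω - g ω)]
  calc P {ω | ℓ < f ω} ≤ P {ω | ℓ - 1 < g ω} + P {ω | 1 ≤ |f ω - g ω|} :=
        (measure_mono hsub).trans (measure_union_le _ _)
    _ ≤ (⨆ g ∈ S, P {ω | ℓ - 1 < g ω}) + ENNReal.ofReal ε :=
        add_le_add (le_biSup (fun g : Ω →ₘ[P] ℝ => P {ω | ℓ - 1 < g ω}) hg)
          ((meas_one_le_abs_sub_le_dist0 f g).trans (ENNReal.ofReal_le_ofReal hfg.le))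
    _ = _ := by rw [ENNReal.ofReal_coe_nnreal]

lemma bounded0_closure0 [IsFiniteMeasure P] (hS : Bounded0 P S) : Bounded0 P (closure0 P S) := by
  have hshift : Tendsto (fun ℓ : ℝ => ⨆ g ∈ S, P {ω | ℓ - 1 < g ω}) atTop (𝓝 0) :=
    hS.comp (tendsto_atTop_add_const_right atTop (-1) tendsto_id)
  exact tendsto_of_tendsto_of_tendsto_of_le_of_le tendsto_const_nhds hshift (fun _ => bot_le)
    fun ℓ => iSup₂_le fun f hf => meas_lt_le_of_mem_closure0 hf ℓ

end Bounded0

section MonotoneSeq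

variable {Ω : Type*} [MeasurableSpace Ω] {P : Measure Ω} {F : ℕ → Ω →ₘ[P] ℝ}

lemma ae_monotone_of_monotone (hF : Monotone F) : ∀ᵐ ω ∂P, Monotone fun n => F n ω := by
  filter_upwards [ae_all_iff.2 fun n => AEEqFun.coeFn_le.2 (hF (Nat.le_succ n))] with ω hω
  exact monotone_nat_of_le_succ hω

lemma ae_bddAbove_of_monotone (hF : Monotone F) (hb : Bounded0 P (range F)) :
    ∀ᵐ ω ∂P, BddAbove (range fun n => F n ω) := by
  set t := {ω | Monotone fun n => F n ω}
  have hunbdd : P ({ω | ¬ BddAbove (range fun n => F n ω)} ∩ t) = 0 := by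
    refine le_antisymm (ENNReal.le_of_forall_pos_le_add fun ε hε _ => ?_) bot_le
    obtain ⟨ℓ, hℓ⟩ := hb.exists_forall_meas_le (ENNReal.coe_pos.2 hε)
    have hsub : {ω | ¬ BddAbove (range fun n => F n ω)} ∩ t ⊆ ⋃ n, {ω | ℓ < F n ω} ∩ t := by
      rintro ω ⟨hω : ¬ BddAbove _, hωt⟩
      rw [not_bddAbove_iff] at hω
      obtain ⟨_, ⟨n, rfl⟩, hn⟩ := hω ℓ
      exact mem_iUnion.2 ⟨n, hn, hωt⟩
    have hmono : Monotone fun n => {ω | ℓ < F n ω} ∩ t :=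
      fun n m hnm ω ⟨hn, hωt⟩ => ⟨hn.trans_le (hωt hnm), hωt⟩
    calc _ ≤ P (⋃ n, {ω | ℓ < F n ω} ∩ t) := measure_mono hsub
      _ = ⨆ n, P ({ω | ℓ < F n ω} ∩ t) := hmono.measure_iUnion
      _ ≤ ε := iSup_le fun n => (measure_mono inter_subset_left).trans (hℓ _ (mem_range_self n))
      _ = 0 + ε := (zero_add _).symm
  filter_upwards [ae_monotone_of_monotone hF, measure_eq_zero_iff_ae_notMem.1 hunbdd]
    with ω hωt hω
  by_contra h
  exact hω ⟨h, hωt⟩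

lemma Monotone.exists_tendsto0_isLUB [IsFiniteMeasure P] (hF : Monotone F)
    (hb : Bounded0 P (range F)) : ∃ f, Tendsto0 P F f ∧ IsLUB (range F) f := by
  set f : Ω →ₘ[P] ℝ := AEEqFun.mk (fun ω => ⨆ n, F n ω)
    (Measurable.iSup fun n => (F n).measurable).aestronglyMeasurable
  have hf : ∀ᵐ ω ∂P, f ω = ⨆ n, F n ω := AEEqFun.coeFn_mk _ _
  have hbdd := ae_bddAbove_of_monotone hF hb
  refine ⟨f, tendsto0_of_ae_tendsto ?_, ?_, ?_⟩
  · filter_upwards [ae_monotone_of_monotone hF, hbdd, hf] with ω hmono hω hfω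
    rw [hfω]
    exact tendsto_atTop_ciSup hmono hω
  · rintro _ ⟨n, rfl⟩
    refine AEEqFun.coeFn_le.1 ?_
    filter_upwards [hbdd, hf] with ω hω hfω
    rw [hfω]
    exact le_ciSup hω n
  · intro g hg
    refine AEEqFun.coeFn_le.1 ?_
    filter_upwards [hf, ae_all_iff.2 fun n => AEEqFun.coeFn_le.2 (hg (mem_range_self n))]
      with ω hfω hω
    rw [hfω]
    exact ciSup_le hω

end MonotoneSeq

section IntegralArctan

variable {Ω : Type*} [MeasurableSpace Ω] {P : Measure Ω} [IsFiniteMeasure P]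

noncomputable def integralArctan (P : Measure Ω) (f : Ω →ₘ[P] ℝ) : ℝ := ∫ ω, arctan (f ω) ∂P

lemma integrable_arctan_comp (f : Ω →ₘ[P] ℝ) : Integrable (fun ω => arctan (f ω)) P :=
  (integrable_const (π / 2)).mono'
    (continuous_arctan.measurable.comp f.measurable).aestronglyMeasurable
    (ae_of_all _ fun _ => (abs_lt.2 ⟨neg_pi_div_two_lt_arctan _, arctan_lt_pi_div_two _⟩).le)

lemma bddAbove_range_integralArctan : BddAbove (range (integralArctan P)) :=
  ⟨P.real univ * (π / 2), by
    rintro _ ⟨f, rfl⟩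
    simpa [integralArctan] using integral_mono (integrable_arctan_comp f) (integrable_const (π / 2))
      fun _ => (arctan_lt_pi_div_two _).le⟩

lemma integralArctan_strictMono : StrictMono (integralArctan P) := by
  intro f g hfg
  have hle : ∀ᵐ ω ∂P, arctan (f ω) ≤ arctan (g ω) :=
    (AEEqFun.coeFn_le.2 hfg.le).mono fun _ hω => arctan_strictMono.monotone hω
  refine (integral_mono_ae (integrable_arctan_comp f) (integrable_arctan_comp g) hle).lt_of_ne
    fun heq => hfg.ne (AEEqFun.ext ?_)
  have hzero := (integral_eq_zero_iff_of_nonneg_ae (hle.mono fun _ => sub_nonneg.2)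
    ((integrable_arctan_comp g).sub (integrable_arctan_comp f))).1
    (by rw [integral_sub (integrable_arctan_comp g) (integrable_arctan_comp f)]
        exact sub_eq_zero.2 heq.symm)
  filter_upwards [hzero] with ω hω
  exact arctan_injective (sub_eq_zero.1 hω).symm

end IntegralArctan

lemma IsChain.exists_monotone_tendsto_sSup {α : Type*} [Preorder α] {K : Set α}
    (hK : IsChain (· ≤ ·) K) (hne : K.Nonempty) {φ : α → ℝ} (hφ : Monotone φ)
    (hbdd : BddAbove (φ '' K)) :
    ∃ F : ℕ → α, Monotone F ∧ (∀ n, F n ∈ K) ∧ Tendsto (φ ∘ F) atTop (𝓝 (sSup (φ '' K))) := by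
  obtain ⟨u, -, hu, huK⟩ := exists_seq_tendsto_sSup (hne.image φ) hbdd
  choose g hgK hgu using huK
  have hdir : Directed (· ≤ ·) g := fun m n =>
    (hK.total (hgK m) (hgK n)).elim (fun h => ⟨n, h, le_rfl⟩) fun h => ⟨m, le_rfl, h⟩
  refine ⟨g ∘ hdir.sequence g, hdir.sequence_mono, fun n => hgK _, ?_⟩
  refine (tendsto_add_atTop_iff_nat 1).1 (tendsto_of_tendsto_of_tendsto_of_le_of_le
    hu tendsto_const_nhds (fun n => ?_) fun n => ?_)
  · rw [← hgu]
    exact hφ (hdir.le_sequence n)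
  · exact le_csSup hbdd (mem_image_of_mem φ (hgK _))

section Maximal

variable {Ω : Type*} [MeasurableSpace Ω] {P : Measure Ω} [IsFiniteMeasure P]
  {S : Set (Ω →ₘ[P] ℝ)}

lemma IsClosed0.exists_upperBound_of_isChain (hS : IsClosed0 P S) (hb : Bounded0 P S)
    {K : Set (Ω →ₘ[P] ℝ)} (hKS : K ⊆ S) (hK : IsChain (· ≤ ·) K) (hne : K.Nonempty) :
    ∃ ub ∈ S, ∀ z ∈ K, z ≤ ub := by
  have hbddK : BddAbove (integralArctan P '' K) :=
    bddAbove_range_integralArctan.mono (image_subset_range _ _)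
  obtain ⟨F, hF, hFK, hFlim⟩ :=
    hK.exists_monotone_tendsto_sSup hne integralArctan_strictMono.monotone hbddK
  obtain ⟨f, hFf, hf⟩ :=
    hF.exists_tendsto0_isLUB (hb.mono (range_subset_iff.2 fun n => hKS (hFK n)))
  refine ⟨f, hS.mem_of_tendsto0 (fun n => hKS (hFK n)) hFf, fun z hz => ?_⟩
  by_cases hzF : ∃ n, z ≤ F n
  · obtain ⟨n, hn⟩ := hzF
    exact hn.trans (hf.1 (mem_range_self n))
  push Not at hzF
  have hfz : f ≤ z := hf.2 <| forall_mem_range.2 fun n =>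
    (hK.total hz (hFK n)).resolve_left (hzF n)
  have hzf : integralArctan P z ≤ integralArctan P f :=
    (le_csSup hbddK (mem_image_of_mem _ hz)).trans <| le_of_tendsto' hFlim fun n =>
      integralArctan_strictMono.monotone (hf.1 (mem_range_self n))
  by_contra hzf'
  exact (integralArctan_strictMono (lt_of_le_not_ge hfz hzf')).not_ge hzf

lemma IsClosed0.maxSet_nonempty (hS : IsClosed0 P S) (hb : Bounded0 P S) (hne : S.Nonempty) :
    (maxSet P S).Nonempty := by
  obtain ⟨x, hx⟩ := hne
  obtain ⟨m, -, hm⟩ := zorn_le_nonempty₀ S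
    (fun K hKS hK y hy => hS.exists_upperBound_of_isChain hb hKS hK ⟨y, hy⟩) x hx
  exact ⟨m, hm.prop, fun g hg hle => le_antisymm hle (hm.2 hg hle)⟩

end Maximal

theorem statement4_general {Ω : Type*} [MeasurableSpace Ω] (P : Measure Ω) [IsProbabilityMeasure P]
    (C : Set (Ω →ₘ[P] ℝ)) (hCne : C.Nonempty)
    (hmaxcl : MaxClosed P C) (hbdd : Bounded0 P C) :
    (maxSet P C).Nonempty := by
  obtain ⟨m, hmS, hm⟩ := (isClosed0_closure0 C).maxSet_nonempty (bounded0_closure0 hbdd)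
    (hCne.mono (subset_closure0 C))
  exact ⟨m, hmaxcl ⟨hmS, hm⟩, fun g hg => hm g (subset_closure0 C hg)⟩

/-- A nonempty convex, max-closed and bounded set `C ⊆ L⁰₊` possesses at
least one maximal element: `C^max ≠ ∅`. -/
theorem statement4 {Ω : Type*} [MeasurableSpace Ω] (P : Measure Ω) [IsProbabilityMeasure P]
    (C : Set (Ω →ₘ[P] ℝ)) (hCL0 : C ⊆ L0plus P) (hCne : C.Nonempty)
    (hconv : Convex ℝ C) (hmaxcl : MaxClosed P C) (hbdd : Bounded0 P C) :
    (maxSet P C).Nonempty :=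
  statement4_general P C hCne hmaxcl hbdd
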